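/- arXiv:1708.08576 — 2 statements merged into one kernel-verified Lean document; each statement's English description precedes it below -/
import Mathlib

section
/- Let p_1 ∈ (0,1) and p_0 ∈ (1/2,1), and let π be a stationary distribution of the backwards branching-like process associated to one cookie of strength p_1 and bias parameter p_0 satisfying ∑_{k≥0} k π(k) < ∞. Then ∑_{k≥0} k π(k) = (1 − p_1) / (2p_0 − 1). -/
open MeasureTheory ProbabilityTheory Filter Topology
open scoped ENNReal NNReal

/-- `bbTrans q l m` is the transition probability `p(l,m) = P(A (l+1) = m)` of the
backwards branching-like process: the probability that in a sequence of independent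
Bernoulli trials whose `j`-th trial succeeds with probability `q j` (`j` 0-indexed),
there are exactly `m` failures before the `(l+1)`-st success.  Equivalently, among the
first `m + l` trials there are exactly `l` successes and trial `m + l` is a success. -/
noncomputable def bbTrans (q : ℕ → ℝ) (l m : ℕ) : ℝ :=
  (∑ s ∈ Finset.univ.filter
      (fun s : Fin (m + l) → Bool =>
        (Finset.univ.filter fun j => s j = true).card = l),
    ∏ j : Fin (m + l), (if s j then q (j : ℕ) else 1 - q (j : ℕ)))
    * q (m + l)

/-- `IsStationaryDist q π` : `π` is a stationary distribution of the backwards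
branching-like process with transition probabilities `bbTrans q`: a probability mass
function on `ℕ` with `π m = ∑' l, π l * p(l,m)` for all `m`. -/
def IsStationaryDist (q : ℕ → ℝ) (π : ℕ → ℝ) : Prop :=
  (∀ k, 0 ≤ π k) ∧ (∑' k, π k) = 1 ∧ ∀ m, π m = ∑' l, π l * bbTrans q l m

/-! Stationarity gives `μ = ∑ₗ π l · E[A_{l+1}]` for the mean `μ` of `π`. Conditioning on the
first trial, `A_{l+1}` is a negative binomial count for the i.i.d. `Bernoulli(p₀)` trials that
follow, with `l` successes left after a success and `l + 1` after a failure, which also adds one.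
So `E[A_{l+1}] = (l (1 - p₀) + 1 - p₁) / p₀`, an affine function of `l`, and
`μ = ((1 - p₀) μ + 1 - p₁) / p₀`, which solves to the claim. -/

noncomputable def successCountProb (q : ℕ → ℝ) (n l : ℕ) : ℝ :=
  ∑ s ∈ Finset.univ.filter
      (fun s : Fin n → Bool => (Finset.univ.filter fun j => s j = true).card = l),
    ∏ j : Fin n, (if s j then q (j : ℕ) else 1 - q (j : ℕ))

lemma bbTrans_eq_successCountProb (q : ℕ → ℝ) (l m : ℕ) :
    bbTrans q l m = successCountProb q (m + l) l * q (m + l) :=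
  rfl

section FirstTrial

variable (q : ℕ → ℝ)

lemma successCountProb_zero (l : ℕ) : successCountProb q 0 l = if l = 0 then 1 else 0 := by
  rcases l with _ | l <;>
    simp [successCountProb, Finset.filter_true_of_mem, Finset.filter_false_of_mem]

lemma card_filter_cons_eq_true {n : ℕ} (b : Bool) (s : Fin n → Bool) :
    (Finset.univ.filter fun j => Fin.consEquiv (fun _ => Bool) (b, s) j = true).card =
      (Finset.univ.filter fun j => s j = true).card + b.toNat := by
  rw [Finset.card_filter, Finset.card_filter, Fin.sum_univ_succ]
  cases b <;> simp [add_comm]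

lemma successCountProb_succ (n l : ℕ) :
    successCountProb q (n + 1) l =
      q 0 * (∑ s ∈ Finset.univ.filter
        (fun s : Fin n → Bool => (Finset.univ.filter fun j => s j = true).card + 1 = l),
          ∏ j : Fin n, (if s j then q (j + 1) else 1 - q (j + 1))) +
      (1 - q 0) * successCountProb (fun j => q (j + 1)) n l := by
  simp only [successCountProb, Finset.sum_filter, Finset.mul_sum]
  rw [← (Fin.consEquiv fun _ : Fin (n + 1) => Bool).sum_comp, Fintype.sum_prod_type,
    Fintype.sum_bool]
  congr 1 <;> refine Finset.sum_congr rfl fun s _ => ?_ <;>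
    rw [card_filter_cons_eq_true] <;> simp [Fin.consEquiv, Fin.prod_univ_succ]

lemma successCountProb_succ_zero (n : ℕ) :
    successCountProb q (n + 1) 0 = (1 - q 0) * successCountProb (fun j => q (j + 1)) n 0 := by
  rw [successCountProb_succ]
  simp

lemma successCountProb_succ_succ (n l : ℕ) :
    successCountProb q (n + 1) (l + 1) =
      q 0 * successCountProb (fun j => q (j + 1)) n l +
        (1 - q 0) * successCountProb (fun j => q (j + 1)) n (l + 1) := by
  rw [successCountProb_succ]
  simp [successCountProb]

lemma bbTrans_zero_succ (m : ℕ) :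
    bbTrans q 0 (m + 1) = (1 - q 0) * bbTrans (fun j => q (j + 1)) 0 m := by
  simp only [bbTrans_eq_successCountProb, Nat.add_zero, successCountProb_succ_zero]
  ring

lemma bbTrans_succ_succ (l m : ℕ) :
    bbTrans q (l + 1) (m + 1) =
      q 0 * bbTrans (fun j => q (j + 1)) l (m + 1) +
        (1 - q 0) * bbTrans (fun j => q (j + 1)) (l + 1) m := by
  simp only [bbTrans_eq_successCountProb, show m + 1 + (l + 1) = m + (l + 1) + 1 by omega,
    show m + 1 + l = m + (l + 1) by omega, successCountProb_succ_succ]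
  ring


end FirstTrial

lemma successCountProb_const (c : ℝ) (n l : ℕ) :
    successCountProb (fun _ => c) n l = n.choose l * c ^ l * (1 - c) ^ (n - l) := by
  induction n generalizing l with
  | zero => rcases l with _ | l <;> simp [successCountProb_zero]
  | succ n ih =>
    rcases l with _ | l
    · simp [successCountProb_succ_zero, ih, pow_succ]
      ring
    · have h : (n.choose (l + 1) : ℝ) * (1 - c) ^ (n - l) =
          n.choose (l + 1) * ((1 - c) * (1 - c) ^ (n - (l + 1))) := by
        rcases lt_or_ge l n with hln | hln
        · rw [← pow_succ', show n - (l + 1) + 1 = n - l by omega]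
        · simp [Nat.choose_eq_zero_of_lt (Nat.lt_succ_of_le hln)]
      rw [successCountProb_succ_succ, ih, ih, Nat.choose_succ_succ, Nat.succ_sub_succ]
      push_cast
      linear_combination -c ^ (l + 1) * h

lemma bbTrans_const (c : ℝ) (l m : ℕ) :
    bbTrans (fun _ => c) l m = (m + l).choose l * c ^ (l + 1) * (1 - c) ^ m := by
  rw [bbTrans_eq_successCountProb, successCountProb_const, Nat.add_sub_cancel, pow_succ]
  ring

lemma hasSum_natCast_mul_iff_succ {f : ℕ → ℝ} {a : ℝ} :
    HasSum (fun m : ℕ => ((m + 1 : ℕ) : ℝ) * f (m + 1)) a ↔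
      HasSum (fun m : ℕ => (m : ℝ) * f m) a := by
  simpa using hasSum_nat_add_iff' (f := fun m : ℕ => (m : ℝ) * f m) (g := a) 1

section Constant

variable {c : ℝ} (hc : ‖1 - c‖ < 1)
include hc

lemma hasSum_bbTrans_const (l : ℕ) : HasSum (bbTrans (fun _ => c) l) 1 := by
  have hc0 : c ≠ 0 := by rintro rfl; simp at hc
  have h := (hasSum_choose_mul_geometric_of_norm_lt_one l hc).mul_left (c ^ (l + 1))
  rw [sub_sub_cancel, mul_one_div_cancel (pow_ne_zero _ hc0)] at h
  refine h.congr_fun fun m => ?_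
  rw [bbTrans_const]
  ring

lemma hasSum_mul_bbTrans_const (l : ℕ) :
    HasSum (fun m : ℕ => (m : ℝ) * bbTrans (fun _ => c) l m) ((l + 1) * (1 - c) / c) := by
  have hc0 : c ≠ 0 := by rintro rfl; simp at hc
  have h := (hasSum_choose_mul_geometric_of_norm_lt_one (l + 1) hc).mul_left
    ((l + 1) * (1 - c) * c ^ (l + 1))
  rw [sub_sub_cancel, show (l + 1) * (1 - c) * c ^ (l + 1) * (1 / c ^ (l + 1 + 1)) =
    (l + 1) * (1 - c) / c by field_simp; ring] at h
  rw [← hasSum_natCast_mul_iff_succ]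
  refine h.congr_fun fun m => ?_
  have key : ((m + 1 + l).choose l : ℝ) * (m + 1) = (m + (l + 1)).choose (l + 1) * (l + 1) := by
    have := Nat.choose_succ_right_eq (m + 1 + l) l
    rw [Nat.add_sub_cancel] at this
    rw [show m + (l + 1) = m + 1 + l by omega]
    exact_mod_cast this.symm
  rw [bbTrans_const]
  push_cast
  linear_combination c ^ (l + 1) * (1 - c) ^ (m + 1) * key

lemma hasSum_succ_mul_bbTrans_const (l : ℕ) :
    HasSum (fun m : ℕ => ((m : ℝ) + 1) * bbTrans (fun _ => c) l m) ((l + 1) * (1 - c) / c + 1) :=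
  ((hasSum_mul_bbTrans_const hc l).add (hasSum_bbTrans_const hc l)).congr_fun fun m => by ring

lemma hasSum_mul_bbTrans_of_succ_eq {q : ℕ → ℝ} (hq : ∀ j, q (j + 1) = c) (l : ℕ) :
    HasSum (fun m : ℕ => (m : ℝ) * bbTrans q l m) ((l * (1 - c) + (1 - q 0)) / c) := by
  have hc0 : c ≠ 0 := by rintro rfl; simp at hc
  have hq' : (fun j => q (j + 1)) = fun _ => c := funext hq
  rw [← hasSum_natCast_mul_iff_succ]
  rcases l with _ | l
  · have h := (hasSum_succ_mul_bbTrans_const hc 0).mul_left (1 - q 0)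
    rw [show (1 - q 0) * ((((0 : ℕ) : ℝ) + 1) * (1 - c) / c + 1) =
      (((0 : ℕ) : ℝ) * (1 - c) + (1 - q 0)) / c by field_simp; ring] at h
    refine h.congr_fun fun m => ?_
    rw [bbTrans_zero_succ, hq']
    push_cast
    ring
  · have h := ((hasSum_natCast_mul_iff_succ.mpr (hasSum_mul_bbTrans_const hc l)).mul_left (q 0)).add
      ((hasSum_succ_mul_bbTrans_const hc (l + 1)).mul_left (1 - q 0))
    rw [show q 0 * ((l + 1) * (1 - c) / c) + (1 - q 0) * (((l + 1 : ℕ) + 1) * (1 - c) / c + 1) =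
      (((l + 1 : ℕ) : ℝ) * (1 - c) + (1 - q 0)) / c by push_cast; field_simp; ring] at h
    refine h.congr_fun fun m => ?_
    rw [bbTrans_succ_succ, hq']
    push_cast
    ring

end Constant

lemma bbTrans_nonneg {q : ℕ → ℝ} (hq₀ : ∀ j, 0 ≤ q j) (hq₁ : ∀ j, q j ≤ 1) (l m : ℕ) :
    0 ≤ bbTrans q l m :=
  mul_nonneg (Finset.sum_nonneg fun s _ => Finset.prod_nonneg fun j _ => by
    split_ifs
    · exact hq₀ j
    · linarith [hq₁ j]) (hq₀ _)

lemma tsum_natCast_mul_eq_of_stationary {P : ℕ → ℕ → ℝ} {π : ℕ → ℝ} {a b : ℝ}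
    (hP : ∀ l m, 0 ≤ P l m) (hπ₀ : ∀ k, 0 ≤ π k) (hπ : Summable π)
    (hstat : ∀ m, π m = ∑' l, π l * P l m)
    (hrow : ∀ l, HasSum (fun m : ℕ => (m : ℝ) * P l m) (a * l + b))
    (hmean : Summable fun k : ℕ => (k : ℝ) * π k) :
    ∑' k : ℕ, (k : ℝ) * π k = a * ∑' k : ℕ, (k : ℝ) * π k + b * ∑' k, π k := by
  set F : ℕ → ℕ → ℝ := fun l m => (m : ℝ) * (π l * P l m)
  have hF₀ : 0 ≤ Function.uncurry F := fun p =>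
    mul_nonneg p.2.cast_nonneg (mul_nonneg (hπ₀ _) (hP _ _))
  have hFrow (l : ℕ) : HasSum (F l) (a * ((l : ℝ) * π l) + b * π l) := by
    rw [show a * ((l : ℝ) * π l) + b * π l = π l * (a * l + b) by ring]
    exact ((hrow l).mul_left (π l)).congr_fun fun m => by ring
  have hF : Summable (Function.uncurry F) :=
    (summable_prod_of_nonneg hF₀).mpr ⟨fun l => (hFrow l).summable,
      ((hmean.mul_left a).add (hπ.mul_left b)).congr fun l => ((hFrow l).tsum_eq).symm⟩
  calc ∑' m : ℕ, (m : ℝ) * π m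
      = ∑' (m : ℕ) (l : ℕ), F l m := tsum_congr fun m => by rw [hstat m, ← tsum_mul_left]
    _ = ∑' (l : ℕ) (m : ℕ), F l m := hF.tsum_comm
    _ = ∑' l : ℕ, (a * ((l : ℝ) * π l) + b * π l) := tsum_congr fun l => (hFrow l).tsum_eq
    _ = a * ∑' k : ℕ, (k : ℝ) * π k + b * ∑' k, π k := by
      rw [(hmean.mul_left a).tsum_add (hπ.mul_left b), tsum_mul_left, tsum_mul_left]

/-- **Mean of the stationary distribution for one cookie.**
If `π` is a stationary distribution of the backwards branching-like process associated
to one cookie of strength `p₁ ∈ (0,1)` and bias parameter `p₀ ∈ (1/2,1)`, with finite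
mean, then `∑' k, k * π k = (1 - p₁) / (2 p₀ - 1)`. -/
theorem stationary_mean_one_cookie
    (p₁ p₀ : ℝ) (hp₁ : p₁ ∈ Set.Ioo (0 : ℝ) 1) (hp₀ : p₀ ∈ Set.Ioo (1 / 2 : ℝ) 1)
    (π : ℕ → ℝ) (hπ : IsStationaryDist (fun j => if j = 0 then p₁ else p₀) π)
    (hsum : Summable fun k : ℕ => (k : ℝ) * π k) :
    (∑' k : ℕ, (k : ℝ) * π k) = (1 - p₁) / (2 * p₀ - 1) := by
  obtain ⟨hπ₀, hπ₁, hstat⟩ := hπ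
  obtain ⟨hp₁0, hp₁1⟩ := hp₁
  obtain ⟨hp₀half, hp₀1⟩ := hp₀
  have hπ : Summable π := by
    by_contra h
    rw [tsum_eq_zero_of_not_summable h] at hπ₁
    exact zero_ne_one hπ₁
  have hc : ‖1 - p₀‖ < 1 := by rw [Real.norm_eq_abs, abs_lt]; constructor <;> linarith
  set q : ℕ → ℝ := fun j => if j = 0 then p₁ else p₀
  have hrow (l : ℕ) : HasSum (fun m : ℕ => (m : ℝ) * bbTrans q l m)
      ((1 - p₀) / p₀ * l + (1 - p₁) / p₀) := by
    convert hasSum_mul_bbTrans_of_succ_eq hc (q := q) (fun j => if_neg j.succ_ne_zero) l using 1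
    rw [show q 0 = p₁ from if_pos rfl]
    ring
  have key := tsum_natCast_mul_eq_of_stationary
    (bbTrans_nonneg (fun j => by dsimp only [q]; split_ifs <;> linarith)
      (fun j => by dsimp only [q]; split_ifs <;> linarith))
    hπ₀ hπ hstat hrow hsum
  rw [hπ₁, mul_one] at key
  have hp₀0 : p₀ ≠ 0 := by linarith
  rw [eq_div_iff (by linarith)]
  field_simp at key
  linarith
end

section
/- Let M ≥ 3 and p ∈ (1/2, 1) satisfy M(2p − 1) > 2. For i ∈ ℕ define p^{(i)} = 1/2 + M(2p−1)/(2(M+i)) and let p_i = (p^{(i)},…,p^{(i)}) ∈ (0,1)^{M+i} (so that δ(M+i, p_i) = M(2p−1) for all i). Let (Y^{(i)}_n)_{n≥0} be the standard excited random walk with M+i cookies and cookie strength vector p_i, and suppose that for each i, Y^{(i)}_n / n converges almost surely to a deterministic constant v(M+i, p_i). Then lim_{i→∞} v(M+i, p_i) = 0. -/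
open MeasureTheory ProbabilityTheory Filter Topology
open scoped ENNReal NNReal

/-- The success probability of the `j+1`-st visit to a site: `p (j+1)` while cookies
remain (`j < M`), and the bias parameter `p₀` afterwards. -/
noncomputable def cookieSeq (M : ℕ) (p : Fin M → ℝ) (p₀ : ℝ) (j : ℕ) : ℝ :=
  if h : j < M then p ⟨j, h⟩ else p₀

/-- `IsEARW P M p p₀ X` : under the probability measure `P`, the process `X` is an
excited asymmetric random walk with `M` cookies of strengths `p ∈ (0,1)^M` and bias
parameter `p₀`: it starts at `0`, moves by `±1` steps, and conditionally on the path
`(X 0, …, X n)` it steps right with probability `p i` on the event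
`#{m ≤ n : X m = X n} = i` for `1 ≤ i ≤ M`, and with probability `p₀` on the event
`#{m ≤ n : X m = X n} > M`. -/
structure IsEARW {Ω : Type*} [MeasurableSpace Ω] (P : Measure Ω)
    (M : ℕ) (p : Fin M → ℝ) (p₀ : ℝ) (X : ℕ → Ω → ℤ) : Prop where
  measurable : ∀ n, Measurable (X n)
  init : ∀ ω, X 0 ω = 0
  steps : ∀ ω n, |X (n + 1) ω - X n ω| = 1
  cond : ∀ (n : ℕ) (w : Fin (n + 1) → ℤ),
    P ({ω | X (n + 1) ω = w (Fin.last n) + 1} ∩ {ω | ∀ m : Fin (n + 1), X m ω = w m})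
      = ENNReal.ofReal
          (cookieSeq M p p₀
            ((Finset.univ.filter fun m : Fin (n + 1) => w m = w (Fin.last n)).card - 1))
        * P {ω | ∀ m : Fin (n + 1), X m ω = w m}


/-!
If every step probability `cookieSeq M p p₀ j` lies within `ε / 2` of `1 / 2`, then whatever the
past, each increment has conditional mean in `[-ε, ε]`. Hence `|𝔼 X n| ≤ n ε`, and by dominated
convergence (`|X n / n| ≤ 1`) the almost sure speed satisfies `|v| ≤ ε`. For the `i`-th walk of
the theorem, `ε = |2 pI i - 1| = |M (2p - 1)| / (M + i) → 0`.
-/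

section

variable {Ω : Type*} {X : ℕ → Ω → ℤ}

def pathCylinder (X : ℕ → Ω → ℤ) (n : ℕ) (w : Fin (n + 1) → ℤ) : Set Ω :=
  {ω | ∀ m : Fin (n + 1), X m ω = w m}

lemma pairwise_disjoint_pathCylinder (n : ℕ) :
    Pairwise (Function.onFun Disjoint (pathCylinder X n)) := by
  intro w w' hne
  refine Set.disjoint_left.2 fun ω hw hw' => hne ?_
  funext m
  rw [← hw m, ← hw' m]

lemma iUnion_pathCylinder (n : ℕ) : ⋃ w, pathCylinder X n w = Set.univ :=
  Set.eq_univ_of_forall fun ω => Set.mem_iUnion.2 ⟨fun m => X m ω, fun _ => rfl⟩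

lemma measurableSet_pathCylinder [MeasurableSpace Ω] (hX : ∀ m, Measurable (X m)) (n : ℕ)
    (w : Fin (n + 1) → ℤ) : MeasurableSet (pathCylinder X n w) := by
  have : pathCylinder X n w = ⋂ m : Fin (n + 1), X m ⁻¹' {w m} := by
    ext ω
    simp [pathCylinder]
  rw [this]
  exact .iInter fun m => hX m (measurableSet_singleton _)

namespace IsEARW

variable [MeasurableSpace Ω] {P : Measure Ω} {M : ℕ} {p : Fin M → ℝ} {p₀ : ℝ}

lemma abs_apply_le (hX : IsEARW P M p p₀ X) (n : ℕ) (ω : Ω) : |X n ω| ≤ n := by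
  induction n with
  | zero => simp [hX.init ω]
  | succ n ih =>
    have hstep := hX.steps ω n
    have htri := abs_sub_abs_le_abs_sub (X (n + 1) ω) (X n ω)
    push_cast
    omega

lemma tsum_measure_pathCylinder [IsProbabilityMeasure P] (hX : IsEARW P M p p₀ X) (n : ℕ) :
    ∑' w, P (pathCylinder X n w) = 1 := by
  rw [← measure_iUnion (pairwise_disjoint_pathCylinder n)
      (measurableSet_pathCylinder hX.measurable n),
    iUnion_pathCylinder, measure_univ]

lemma measurableSet_stepUp (hX : IsEARW P M p p₀ X) (n : ℕ) :
    MeasurableSet {ω | X (n + 1) ω = X n ω + 1} := by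
  have : {ω | X (n + 1) ω = X n ω + 1} = (fun ω => X (n + 1) ω - X n ω) ⁻¹' {1} := by
    ext ω
    simp [sub_eq_iff_eq_add']
  rw [this]
  exact ((hX.measurable (n + 1)).sub (hX.measurable n)) (measurableSet_singleton 1)

lemma measure_stepUp (hX : IsEARW P M p p₀ X) (n : ℕ) :
    P {ω | X (n + 1) ω = X n ω + 1} = ∑' w, ENNReal.ofReal (cookieSeq M p p₀
      ((Finset.univ.filter fun m : Fin (n + 1) => w m = w (Fin.last n)).card - 1))
        * P (pathCylinder X n w) := by
  set S := {ω | X (n + 1) ω = X n ω + 1}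
  have hS : S = ⋃ w, S ∩ pathCylinder X n w := by
    rw [← Set.inter_iUnion, iUnion_pathCylinder, Set.inter_univ]
  have hSw : ∀ w, S ∩ pathCylinder X n w =
      {ω | X (n + 1) ω = w (Fin.last n) + 1} ∩ pathCylinder X n w := by
    intro w
    ext ω
    simp only [S, pathCylinder, Set.mem_inter_iff, Set.mem_ofPred_eq, and_congr_left_iff]
    intro hω
    rw [← hω (Fin.last n), Fin.val_last]
  rw [hS, measure_iUnion
    (fun w w' hne => (pairwise_disjoint_pathCylinder n hne).mono Set.inter_subset_right
      Set.inter_subset_right)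
    (fun w => (hX.measurableSet_stepUp n).inter (measurableSet_pathCylinder hX.measurable n w))]
  exact tsum_congr fun w => by rw [hSw, pathCylinder, hX.cond n w]

lemma measure_stepUp_mem_Icc [IsProbabilityMeasure P] (hX : IsEARW P M p p₀ X) {a b : ℝ}
    (hab : ∀ j, cookieSeq M p p₀ j ∈ Set.Icc a b) (n : ℕ) :
    P {ω | X (n + 1) ω = X n ω + 1} ∈ Set.Icc (ENNReal.ofReal a) (ENNReal.ofReal b) := by
  rw [hX.measure_stepUp n]
  constructor
  · calc ENNReal.ofReal a = ∑' w, ENNReal.ofReal a * P (pathCylinder X n w) := by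
          rw [ENNReal.tsum_mul_left, hX.tsum_measure_pathCylinder, mul_one]
      _ ≤ _ := ENNReal.tsum_le_tsum fun w =>
          mul_le_mul_left (ENNReal.ofReal_le_ofReal (hab _).1) _
  · calc _ ≤ ∑' w, ENNReal.ofReal b * P (pathCylinder X n w) :=
          ENNReal.tsum_le_tsum fun w => mul_le_mul_left (ENNReal.ofReal_le_ofReal (hab _).2) _
      _ = ENNReal.ofReal b := by
          rw [ENNReal.tsum_mul_left, hX.tsum_measure_pathCylinder, mul_one]

lemma abs_two_mul_measure_stepUp_sub_one_le [IsProbabilityMeasure P] (hX : IsEARW P M p p₀ X)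
    {ε : ℝ} (hε : ∀ j, |2 * cookieSeq M p p₀ j - 1| ≤ ε) (n : ℕ) :
    |2 * P.real {ω | X (n + 1) ω = X n ω + 1} - 1| ≤ ε := by
  have hab : ∀ j, cookieSeq M p p₀ j ∈ Set.Icc ((1 - ε) / 2) ((1 + ε) / 2) := fun j => by
    have := abs_le.1 (hε j)
    constructor <;> linarith
  have hb : 0 ≤ (1 + ε) / 2 := by linarith [(abs_nonneg _).trans (hε 0)]
  obtain ⟨hlo, hhi⟩ := hX.measure_stepUp_mem_Icc hab n
  have hlo' := (ENNReal.ofReal_le_iff_le_toReal (measure_ne_top _ _)).1 hlo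
  have hhi' := ENNReal.toReal_le_of_le_ofReal hb hhi
  rw [measureReal_def, abs_le]
  constructor <;> linarith

lemma sub_eq_indicator_stepUp (hX : IsEARW P M p p₀ X) (n : ℕ) :
    (fun ω => (X (n + 1) ω : ℝ) - X n ω) =
      fun ω => {ω | X (n + 1) ω = X n ω + 1}.indicator (fun _ => (2 : ℝ)) ω - 1 := by
  funext ω
  rcases abs_eq (zero_le_one' ℤ) |>.1 (hX.steps ω n) with hup | hdown
  · rw [Set.indicator_of_mem (by simp only [Set.mem_ofPred_eq]; omega), ← Int.cast_sub, hup]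
    norm_num
  · rw [Set.indicator_of_notMem (by simp only [Set.mem_ofPred_eq]; omega), ← Int.cast_sub, hdown]
    norm_num

lemma integrable (hX : IsEARW P M p p₀ X) [IsFiniteMeasure P] (n : ℕ) :
    Integrable (fun ω => (X n ω : ℝ)) P := by
  refine (integrable_const (n : ℝ)).mono'
    (measurable_from_top.comp (hX.measurable n)).aestronglyMeasurable
    (.of_forall fun ω => ?_)
  rw [Real.norm_eq_abs]
  exact_mod_cast hX.abs_apply_le n ω

lemma integral_succ [IsProbabilityMeasure P] (hX : IsEARW P M p p₀ X) (n : ℕ) :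
    ∫ ω, (X (n + 1) ω : ℝ) ∂P =
      ∫ ω, (X n ω : ℝ) ∂P + (2 * P.real {ω | X (n + 1) ω = X n ω + 1} - 1) := by
  have hdrift : ∫ ω, ((X (n + 1) ω : ℝ) - X n ω) ∂P =
      2 * P.real {ω | X (n + 1) ω = X n ω + 1} - 1 := by
    rw [hX.sub_eq_indicator_stepUp n, integral_sub
      ((integrable_const _).indicator (hX.measurableSet_stepUp n)) (integrable_const _),
      integral_indicator_const _ (hX.measurableSet_stepUp n)]
    simp [mul_comm]
  have hsum := integral_add (hX.integrable n) ((hX.integrable (n + 1)).sub (hX.integrable n))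
  simp only [Pi.sub_apply, add_sub_cancel] at hsum
  rw [← hdrift, ← hsum]

lemma abs_integral_le [IsProbabilityMeasure P] (hX : IsEARW P M p p₀ X) {ε : ℝ}
    (hε : ∀ j, |2 * cookieSeq M p p₀ j - 1| ≤ ε) (n : ℕ) :
    |∫ ω, (X n ω : ℝ) ∂P| ≤ n * ε := by
  induction n with
  | zero => simp [hX.init]
  | succ n ih =>
    rw [hX.integral_succ n, Nat.cast_succ, add_one_mul]
    exact (abs_add_le _ _).trans
      (add_le_add ih (hX.abs_two_mul_measure_stepUp_sub_one_le hε n))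

lemma abs_speed_le [IsProbabilityMeasure P] (hX : IsEARW P M p p₀ X) {ε : ℝ}
    (hε : ∀ j, |2 * cookieSeq M p p₀ j - 1| ≤ ε) {v : ℝ}
    (hv : ∀ᵐ ω ∂P, Tendsto (fun n : ℕ => (X n ω : ℝ) / n) atTop (𝓝 v)) :
    |v| ≤ ε := by
  have hbound : ∀ n : ℕ, ∀ᵐ ω ∂P, ‖(X n ω : ℝ) / n‖ ≤ 1 := fun n => .of_forall fun ω => by
    rw [Real.norm_eq_abs, abs_div, Nat.abs_cast]
    exact div_le_one_of_le₀ (by exact_mod_cast hX.abs_apply_le n ω) n.cast_nonneg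
  have hlim : Tendsto (fun n : ℕ => ∫ ω, (X n ω : ℝ) / n ∂P) atTop (𝓝 v) := by
    simpa using tendsto_integral_of_dominated_convergence (fun _ => 1)
      (fun n => ((measurable_from_top.comp (hX.measurable n)).div_const _).aestronglyMeasurable)
      (integrable_const 1) hbound hv
  refine le_of_tendsto hlim.abs (eventually_ge_atTop 1 |>.mono fun n hn => ?_)
  have hn : (0 : ℝ) < n := by exact_mod_cast hn
  rw [integral_div, abs_div, Nat.abs_cast, div_le_iff₀ hn, mul_comm]
  exact hX.abs_integral_le hε n

end IsEARW

end

theorem speed_tendsto_zero_same_delta_general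
    (M : ℕ) (p : ℝ)
    (pI : ℕ → ℝ) (hpI : ∀ i : ℕ, pI i = 1 / 2 + (M : ℝ) * (2 * p - 1) / (2 * (M + i)))
    (Ω : ℕ → Type*) [∀ i, MeasurableSpace (Ω i)]
    (P : ∀ i, Measure (Ω i)) [∀ i, IsProbabilityMeasure (P i)]
    (Y : ∀ i : ℕ, ℕ → Ω i → ℤ)
    (hY : ∀ i, IsEARW (P i) (M + i) (fun _ => pI i) (1 / 2) (Y i))
    (v : ℕ → ℝ)
    (hv : ∀ i, ∀ᵐ ω ∂P i,
      Tendsto (fun n : ℕ => (Y i n ω : ℝ) / n) atTop (nhds (v i))) :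
    Tendsto v atTop (nhds 0) := by
  set c := (M : ℝ) * (2 * p - 1)
  have hcookie : ∀ i j,
      |2 * cookieSeq (M + i) (fun _ => pI i) (1 / 2) j - 1| ≤ |c| / (M + i) := by
    intro i j
    have hdrift : 2 * pI i - 1 = c / (M + i) := by rw [hpI i, ← div_div]; ring
    unfold cookieSeq
    split
    · rw [hdrift, abs_div, abs_of_nonneg (by positivity : (0 : ℝ) ≤ M + i)]
    · norm_num
      positivity
  have hlim : Tendsto (fun i : ℕ => |c| / (M + i)) atTop (𝓝 0) :=
    tendsto_const_nhds.div_atTop (tendsto_atTop_add_const_left _ _ tendsto_natCast_atTop_atTop)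
  exact squeeze_zero_norm (fun i => (hY i).abs_speed_le (hcookie i) (hv i)) hlim

/-- **Walks with the same `δ` but more, weaker cookies slow down to zero.**
Fix `M ≥ 3` and `p ∈ (1/2,1)` with `M (2p - 1) > 2`.  For `i ∈ ℕ` let
`pI i = 1/2 + M (2p-1) / (2 (M+i))`, so the cookie vector `(pI i, …, pI i) ∈ ℝ^(M+i)`
has `δ(M+i, p_i) = M (2p-1)` for every `i`.  If `Y^(i)` is the standard excited random
walk with `M+i` cookies of strength `pI i` and `Y^(i) n / n → v i` a.s., then
`v i → 0` as `i → ∞`. -/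
theorem speed_tendsto_zero_same_delta
    (M : ℕ) (hM : 3 ≤ M) (p : ℝ) (hp : p ∈ Set.Ioo (1 / 2 : ℝ) 1)
    (hδ : 2 < (M : ℝ) * (2 * p - 1))
    (pI : ℕ → ℝ) (hpI : ∀ i : ℕ, pI i = 1 / 2 + (M : ℝ) * (2 * p - 1) / (2 * (M + i)))
    (Ω : ℕ → Type*) [∀ i, MeasurableSpace (Ω i)]
    (P : ∀ i, Measure (Ω i)) [∀ i, IsProbabilityMeasure (P i)]
    (Y : ∀ i : ℕ, ℕ → Ω i → ℤ)
    (hY : ∀ i, IsEARW (P i) (M + i) (fun _ => pI i) (1 / 2) (Y i))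
    (v : ℕ → ℝ)
    (hv : ∀ i, ∀ᵐ ω ∂P i,
      Tendsto (fun n : ℕ => (Y i n ω : ℝ) / n) atTop (nhds (v i))) :
    Tendsto v atTop (nhds 0) :=
  speed_tendsto_zero_same_delta_general M p pI hpI Ω P Y hY v hv
end
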